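/- arXiv:2412.08440 — 5 statements merged into one kernel-verified Lean document; each statement's English description precedes it below -/
import Mathlib

section
/- X ≤_{p0-tvar} Y if and only if, for all p ≥ p0, ∫_{F^{-1}(p)}^{+∞} (1-F(t)) dt + F^{-1}(p)(1-p) ≤ ∫_{G^{-1}(p)}^{+∞} (1-G(t)) dt + G^{-1}(p)(1-p). -/
open MeasureTheory Set Filter Topology
open scoped ENNReal
set_option linter.unusedSectionVars false
set_option linter.unusedVariables false

/-- Distribution function of a measure on ℝ. -/
noncomputable def cdfR (μ : Measure ℝ) (x : ℝ) : ℝ := (μ (Iic x)).toReal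

/-- Quantile function (generalized inverse of the cdf). -/
noncomputable def quantR (μ : Measure ℝ) (p : ℝ) : ℝ := sInf {x | p ≤ cdfR μ x}

/-- Tail value at risk. -/
noncomputable def tvarR (μ : Measure ℝ) (p : ℝ) : ℝ := (1 - p)⁻¹ * ∫ u in p..1, quantR μ u

section Aux

variable (μ : Measure ℝ) [IsProbabilityMeasure μ]

lemma cdfR_nonneg (x : ℝ) : 0 ≤ cdfR μ x := ENNReal.toReal_nonneg

lemma cdfR_le_one (x : ℝ) : cdfR μ x ≤ 1 := by
  have h : μ (Iic x) ≤ 1 := prob_le_one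
  have := (ENNReal.toReal_le_toReal (measure_ne_top μ _) ENNReal.one_ne_top).2 h
  simpa [cdfR] using this

lemma cdfR_mono : Monotone (cdfR μ) := fun x y hxy =>
  (ENNReal.toReal_le_toReal (measure_ne_top μ _) (measure_ne_top μ _)).2
    (measure_mono (Iic_subset_Iic.2 hxy))

lemma tendsto_cdfR_atTop : Tendsto (cdfR μ) atTop (𝓝 1) := by
  have h := tendsto_measure_Iic_atTop (μ := μ)
  have h2 : Tendsto (fun x => (μ (Iic x)).toReal) atTop (𝓝 (μ (univ : Set ℝ)).toReal) :=
    (ENNReal.tendsto_toReal (measure_ne_top μ _)).comp h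
  exact (by simpa [measure_univ] using h2 : Tendsto (fun x => (μ (Iic x)).toReal) atTop (𝓝 1))

lemma tendsto_cdfR_atBot : Tendsto (cdfR μ) atBot (𝓝 0) := by
  have h : Tendsto (fun x : ℝ => μ (Iic x)) atBot (𝓝 (μ (⋂ x : ℝ, Iic x))) :=
    tendsto_measure_iInter_atBot (fun x => measurableSet_Iic.nullMeasurableSet)
      (fun x y hxy => Iic_subset_Iic.2 hxy) ⟨0, measure_ne_top μ _⟩
  have he : (⋂ x : ℝ, Iic x) = (∅ : Set ℝ) := by
    ext y; simp only [mem_iInter, mem_Iic, mem_empty_iff_false, iff_false, not_forall, not_le]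
    exact ⟨y - 1, by linarith⟩
  rw [he, measure_empty] at h
  have h2 : Tendsto (fun x : ℝ => (μ (Iic x)).toReal) atBot (𝓝 ((0:ℝ≥0∞)).toReal) :=
    (ENNReal.tendsto_toReal (by simp)).comp h
  exact (by simpa using h2 : Tendsto (fun x : ℝ => (μ (Iic x)).toReal) atBot (𝓝 0))

variable {μ}

lemma quantSet_nonempty {p : ℝ} (hp : p < 1) : {x | p ≤ cdfR μ x}.Nonempty := by
  have := (tendsto_cdfR_atTop μ).eventually (eventually_ge_nhds hp)
  rcases this.exists with ⟨x, hx⟩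
  exact ⟨x, hx⟩

lemma quantSet_bddBelow {p : ℝ} (hp : 0 < p) : BddBelow {x | p ≤ cdfR μ x} := by
  have := (tendsto_cdfR_atBot μ).eventually (eventually_lt_nhds hp)
  rcases eventually_atBot.1 this with ⟨x0, hx0⟩
  refine ⟨x0, fun y hy => ?_⟩
  by_contra hlt
  push_neg at hlt
  exact absurd hy (not_le.2 (hx0 y hlt.le))

lemma le_cdfR_quantR {p : ℝ} (hp : p ∈ Ioo (0:ℝ) 1) : p ≤ cdfR μ (quantR μ p) := by
  set S := {x | p ≤ cdfR μ x} with hS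
  have hne : S.Nonempty := quantSet_nonempty hp.2
  have hbd : BddBelow S := quantSet_bddBelow hp.1
  set q := sInf S with hq
  -- q + 1/(n+1) ∈ S for each n
  have hmem : ∀ n : ℕ, p ≤ cdfR μ (q + 1/(n+1)) := by
    intro n
    have hpos : (0:ℝ) < 1/(n+1) := by positivity
    have : q < q + 1/(n+1) := by linarith
    obtain ⟨s, hsS, hs⟩ := (csInf_lt_iff hbd hne).1 this
    exact le_trans hsS (cdfR_mono μ hs.le)
  have hint : (⋂ n : ℕ, Iic (q + 1/(n+1))) = Iic q := by
    ext y
    simp only [mem_iInter, mem_Iic]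
    constructor
    · intro h
      have hlim : Tendsto (fun n : ℕ => q + 1/((n:ℝ)+1)) atTop (𝓝 (q + 0)) :=
        tendsto_const_nhds.add tendsto_one_div_add_atTop_nhds_zero_nat
      rw [add_zero] at hlim
      exact ge_of_tendsto hlim (Eventually.of_forall h)
    · intro h n
      have hpos : (0:ℝ) < 1/((n:ℝ)+1) := by positivity
      linarith
  have hmono : Tendsto (fun n : ℕ => μ (Iic (q + 1/(n+1)))) atTop (𝓝 (μ (Iic q))) := by
    have := tendsto_measure_iInter_atTop (μ := μ)
      (s := fun n : ℕ => Iic (q + 1/((n:ℝ)+1)))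
      (fun n => measurableSet_Iic.nullMeasurableSet)
      (fun n m hnm => Iic_subset_Iic.2 (by
        have hc : (n:ℝ) ≤ m := Nat.cast_le.2 hnm
        have : (1:ℝ)/((m:ℝ)+1) ≤ 1/((n:ℝ)+1) := by
          apply one_div_le_one_div_of_le (by positivity)
          linarith
        linarith))
      ⟨0, measure_ne_top μ _⟩
    rw [hint] at this
    exact this
  have htoReal : Tendsto (fun n : ℕ => cdfR μ (q + 1/(n+1))) atTop (𝓝 (cdfR μ q)) := by
    have := (ENNReal.tendsto_toReal (measure_ne_top μ (Iic q))).comp hmono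
    exact this
  exact ge_of_tendsto htoReal (Eventually.of_forall hmem)

lemma quantR_le_iff {p x : ℝ} (hp : p ∈ Ioo (0:ℝ) 1) :
    quantR μ p ≤ x ↔ p ≤ cdfR μ x := by
  constructor
  · intro h
    exact le_trans (le_cdfR_quantR hp) (cdfR_mono μ h)
  · intro h
    exact csInf_le (quantSet_bddBelow hp.1) h

lemma quantR_monoOn : MonotoneOn (quantR μ) (Ioo (0:ℝ) 1) := by
  intro p hp q hq hpq
  rw [quantR_le_iff hp]
  exact le_trans hpq (le_cdfR_quantR hq)

lemma quantR_aemeasurable :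
    AEMeasurable (quantR μ) ((volume : Measure ℝ).restrict (Ioo (0:ℝ) 1)) :=
  aemeasurable_restrict_of_monotoneOn measurableSet_Ioo quantR_monoOn

lemma map_quantR : ((volume : Measure ℝ).restrict (Ioo (0:ℝ) 1)).map (quantR μ) = μ := by
  have hprob : IsProbabilityMeasure ((volume : Measure ℝ).restrict (Ioo (0:ℝ) 1)) := by
    constructor
    simp [Real.volume_Ioo]
  have hmap : IsProbabilityMeasure
      (((volume : Measure ℝ).restrict (Ioo (0:ℝ) 1)).map (quantR μ)) :=
    Measure.isProbabilityMeasure_map quantR_aemeasurable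
  refine Measure.ext_of_Iic _ _ (fun x => ?_)
  rw [Measure.map_apply_of_aemeasurable quantR_aemeasurable measurableSet_Iic,
    Measure.restrict_apply' measurableSet_Ioo]
  have hset : quantR μ ⁻¹' Iic x ∩ Ioo (0:ℝ) 1 = Iic (cdfR μ x) ∩ Ioo (0:ℝ) 1 := by
    ext u
    simp only [mem_inter_iff, mem_preimage, mem_Iic, and_congr_left_iff]
    intro hu
    exact quantR_le_iff hu
  rw [hset]
  have hc0 : 0 ≤ cdfR μ x := cdfR_nonneg μ x
  have hc1 : cdfR μ x ≤ 1 := cdfR_le_one μ x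
  have hvol : volume (Iic (cdfR μ x) ∩ Ioo (0:ℝ) 1) = ENNReal.ofReal (cdfR μ x) := by
    rcases lt_or_eq_of_le hc1 with h1 | h1
    · have : Iic (cdfR μ x) ∩ Ioo (0:ℝ) 1 = Ioc 0 (cdfR μ x) := by
        ext u
        simp only [mem_inter_iff, mem_Iic, mem_Ioo, mem_Ioc]
        constructor
        · rintro ⟨h, h2, _⟩; exact ⟨h2, h⟩
        · rintro ⟨h2, h⟩; exact ⟨h, h2, lt_of_le_of_lt h h1⟩
      rw [this, Real.volume_Ioc, sub_zero]
    · have : Iic (cdfR μ x) ∩ Ioo (0:ℝ) 1 = Ioo 0 1 := by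
        apply inter_eq_right.2
        intro u hu
        simp only [mem_Iic]
        rw [h1]; exact hu.2.le
      rw [this, Real.volume_Ioo, ← h1]
      norm_num
  rw [hvol, cdfR, ENNReal.ofReal_toReal (measure_ne_top μ _)]

variable (μ) in
lemma integrableOn_quantR (hX : Integrable id μ) :
    IntegrableOn (quantR μ) (Ioo (0:ℝ) 1) volume := by
  have := hX
  rw [← map_quantR (μ := μ)] at this
  rw [integrable_map_measure aestronglyMeasurable_id quantR_aemeasurable] at this
  simpa [Function.comp, IntegrableOn] using this

/-- The key identity. -/
lemma key_identity (hX : Integrable id μ) {p : ℝ} (hp : p ∈ Ioo (0:ℝ) 1) :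
    (∫ t in Ioi (quantR μ p), (1 - cdfR μ t)) + quantR μ p * (1 - p)
      = ∫ u in p..1, quantR μ u := by
  set a := quantR μ p with ha
  set f : ℝ → ℝ := fun x => max (x - a) 0 with hf
  have hf_int : Integrable f μ := (hX.sub (integrable_const a)).pos_part
  have hf_nn : 0 ≤ᵐ[μ] f := Eventually.of_forall fun x => le_max_right _ _
  -- layer cake
  have hlayer : ∫ x, f x ∂μ = ∫ t in Ioi (0:ℝ), ((μ {x : ℝ | t < f x}).toReal) :=
    hf_int.integral_eq_integral_meas_lt hf_nn
  -- identify the level sets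
  have hlevel : ∀ t ∈ Ioi (0:ℝ), (μ {x : ℝ | t < f x}).toReal = 1 - cdfR μ (t + a) := by
    intro t ht
    have hset : {x : ℝ | t < f x} = Ioi (t + a) := by
      ext x
      simp only [hf, mem_setOf_eq, mem_Ioi, lt_max_iff]
      constructor
      · rintro (h | h)
        · linarith
        · exact absurd ht (by simpa using not_lt.2 h.le)
      · intro h; left; linarith
    rw [hset]
    have hcompl : Ioi (t + a) = (Iic (t + a))ᶜ := by simp
    rw [hcompl, measure_compl measurableSet_Iic (measure_ne_top μ _), measure_univ]
    rw [ENNReal.toReal_sub_of_le prob_le_one ENNReal.one_ne_top]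
    simp [cdfR]
  have hstep1 : ∫ t in Ioi (0:ℝ), ((μ {x : ℝ | t < f x}).toReal)
      = ∫ t in Ioi (0:ℝ), (1 - cdfR μ (t + a)) :=
    setIntegral_congr_fun measurableSet_Ioi hlevel
  -- translation
  have htrans : ∫ t in Ioi a, (1 - cdfR μ t) = ∫ t in Ioi (0:ℝ), (1 - cdfR μ (t + a)) := by
    have hmp : MeasurePreserving (fun t : ℝ => t + a) volume volume :=
      measurePreserving_add_right volume a
    have hemb : MeasurableEmbedding (fun t : ℝ => t + a) :=
      (Homeomorph.addRight a).isClosedEmbedding.measurableEmbedding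
    calc ∫ t in Ioi a, (1 - cdfR μ t)
        = ∫ t in Ioi a, (1 - cdfR μ t) ∂(Measure.map (fun t : ℝ => t + a) volume) := by
          rw [hmp.map_eq]
      _ = ∫ t in (fun t : ℝ => t + a) ⁻¹' (Ioi a), (1 - cdfR μ (t + a)) := by
          rw [hemb.setIntegral_map]
      _ = ∫ t in Ioi (0:ℝ), (1 - cdfR μ (t + a)) := by
          congr 1
          ext t
          simp
  -- pushforward to the quantile side
  have hq_int : IntegrableOn (quantR μ) (Ioo (0:ℝ) 1) volume := integrableOn_quantR μ hX
  have hstep2 : ∫ x, f x ∂μ = ∫ u in Ioo (0:ℝ) 1, f (quantR μ u) := by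
    conv_lhs => rw [← map_quantR (μ := μ)]
    rw [integral_map quantR_aemeasurable]
    exact (continuous_id.sub continuous_const).max continuous_const |>.aestronglyMeasurable
  have hind : ∀ u ∈ Ioo (0:ℝ) 1,
      f (quantR μ u) = (Ioo p 1).indicator (fun u => quantR μ u - a) u := by
    intro u hu
    by_cases hup : p < u
    · have hu1 : u ∈ Ioo p 1 := ⟨hup, hu.2⟩
      rw [indicator_of_mem hu1]
      have : a ≤ quantR μ u := quantR_monoOn hp hu hup.le
      simp only [hf]
      rw [max_eq_left (by linarith)]
    · push_neg at hup
      have hu1 : u ∉ Ioo p 1 := fun h => absurd h.1 (not_lt.2 hup)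
      rw [indicator_of_notMem hu1]
      have : quantR μ u ≤ a := quantR_monoOn hu hp hup
      simp only [hf]
      rw [max_eq_right (by linarith)]
  have hstep3 : ∫ u in Ioo (0:ℝ) 1, f (quantR μ u)
      = ∫ u in Ioo p 1, (quantR μ u - a) := by
    rw [setIntegral_congr_fun measurableSet_Ioo hind, setIntegral_indicator measurableSet_Ioo]
    congr 1
    rw [inter_eq_right.2 (Ioo_subset_Ioo hp.1.le le_rfl)]
  have hIoosub : Ioo p 1 ⊆ Ioo (0:ℝ) 1 := Ioo_subset_Ioo hp.1.le le_rfl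
  have hq_int' : IntegrableOn (quantR μ) (Ioo p 1) volume := hq_int.mono_set hIoosub
  have hstep4 : ∫ u in Ioo p 1, (quantR μ u - a)
      = (∫ u in p..1, quantR μ u) - a * (1 - p) := by
    rw [integral_sub hq_int' (integrableOn_const (by simp [Real.volume_Ioo]))]
    congr 1
    · rw [intervalIntegral.integral_of_le hp.2.le,
        ← Measure.restrict_congr_set (Ioo_ae_eq_Ioc (a := p) (b := (1:ℝ)))]
    · rw [setIntegral_const]
      simp [Real.volume_Ioo, ENNReal.toReal_ofReal (by linarith [hp.2] : (0:ℝ) ≤ 1 - p),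
          max_eq_left (by linarith [hp.2] : (0:ℝ) ≤ 1 - p)]
      ring
  have := hlayer.symm.trans hstep2
  rw [hstep1, ← htrans, hstep3, hstep4] at this
  -- this : ∫ t in Ioi a, (1 - cdfR μ t) = (∫ u in p..1, quantR μ u) - a * (1 - p)
  linarith [this]

lemma intervalIntegrable_quantR (hX : Integrable id μ) {p : ℝ} (hp : 0 < p) :
    IntegrableOn (quantR μ) (Icc p 1) volume := by
  have h1 : IntegrableOn (quantR μ) (Ioo p 1) volume :=
    (integrableOn_quantR μ hX).mono_set (Ioo_subset_Ioo hp.le le_rfl)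
  exact h1.congr_set_ae (Ioo_ae_eq_Icc (μ := volume)).symm

end Aux

theorem stmt5 (μ ν : Measure ℝ) [IsProbabilityMeasure μ] [IsProbabilityMeasure ν]
    (hX : Integrable id μ) (hY : Integrable id ν)
    (p0 : ℝ) (hp0 : p0 ∈ Set.Ioo (0:ℝ) 1) :
    (∀ p, p0 < p → p < 1 → tvarR μ p ≤ tvarR ν p) ↔
      (∀ p, p0 ≤ p → p < 1 →
        (∫ t in Set.Ioi (quantR μ p), (1 - cdfR μ t)) + quantR μ p * (1 - p) ≤
          (∫ t in Set.Ioi (quantR ν p), (1 - cdfR ν t)) + quantR ν p * (1 - p)) := by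
  have hmem : ∀ p, p0 ≤ p → p < 1 → p ∈ Ioo (0:ℝ) 1 :=
    fun p h1 h2 => ⟨lt_of_lt_of_le hp0.1 h1, h2⟩
  constructor
  · intro h p hp1 hp2
    have hpIoo : p ∈ Ioo (0:ℝ) 1 := hmem p hp1 hp2
    rw [key_identity hX hpIoo, key_identity hY hpIoo]
    -- reduce to the quantile integral inequality
    have hgoal : ∀ q, p0 < q → q < 1 →
        (∫ u in q..1, quantR μ u) ≤ ∫ u in q..1, quantR ν u := by
      intro q hq1 hq2
      have htv := h q hq1 hq2
      have hpos : (0:ℝ) < 1 - q := by linarith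
      unfold tvarR at htv
      have := (mul_le_mul_iff_right₀ (inv_pos.2 hpos)).1 htv
      exact this
    rcases eq_or_lt_of_le hp1 with heq | hlt
    · -- limit argument at p = p0
      subst heq
      have hcontμ : ContinuousOn (fun q => ∫ u in q..1, quantR μ u) (Icc p0 1) := by
        have hInt : IntegrableOn (quantR μ) (uIcc p0 1) volume := by
          rw [uIcc_of_le hp2.le]
          exact intervalIntegrable_quantR hX hpIoo.1
        have := intervalIntegral.continuousOn_primitive_interval_left hInt
        rwa [uIcc_of_le hp2.le] at this
      have hcontν : ContinuousOn (fun q => ∫ u in q..1, quantR ν u) (Icc p0 1) := by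
        have hInt : IntegrableOn (quantR ν) (uIcc p0 1) volume := by
          rw [uIcc_of_le hp2.le]
          exact intervalIntegrable_quantR hY hpIoo.1
        have := intervalIntegral.continuousOn_primitive_interval_left hInt
        rwa [uIcc_of_le hp2.le] at this
      have hcont : ContinuousWithinAt
          (fun q => (∫ u in q..1, quantR ν u) - ∫ u in q..1, quantR μ u) (Icc p0 1) p0 :=
        ((hcontν p0 (left_mem_Icc.2 hp2.le)).sub (hcontμ p0 (left_mem_Icc.2 hp2.le)))
      have hIoo_mem : Ioo p0 1 ∈ 𝓝[Ioo p0 1] p0 := self_mem_nhdsWithin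
      have hne : (𝓝[Ioo p0 1] p0).NeBot := by
        apply IsGLB.nhdsWithin_neBot
        · exact isGLB_Ioo hp2
        · exact nonempty_Ioo.2 hp2
      have hcont' : ContinuousWithinAt
          (fun q => (∫ u in q..1, quantR ν u) - ∫ u in q..1, quantR μ u) (Ioo p0 1) p0 :=
        hcont.mono Ioo_subset_Icc_self
      have hlim := hcont'.tendsto
      have hev : ∀ᶠ q in 𝓝[Ioo p0 1] p0,
          0 ≤ (∫ u in q..1, quantR ν u) - ∫ u in q..1, quantR μ u := by
        filter_upwards [hIoo_mem] with q hq
        have := hgoal q hq.1 hq.2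
        linarith
      have h0 : 0 ≤ (∫ u in p0..1, quantR ν u) - ∫ u in p0..1, quantR μ u :=
        ge_of_tendsto hlim hev
      linarith
    · exact hgoal p hlt hp2
  · intro h p hp1 hp2
    have hpIoo : p ∈ Ioo (0:ℝ) 1 := hmem p hp1.le hp2
    have := h p hp1.le hp2
    rw [key_identity hX hpIoo, key_identity hY hpIoo] at this
    unfold tvarR
    have hpos : (0:ℝ) ≤ (1 - p)⁻¹ := by
      have : (0:ℝ) < 1 - p := by linarith
      positivity
    exact mul_le_mul_of_nonneg_left this hpos
end

section
/- If X ≤_{p0-tvar} Y for p0 ∈ (0,1) and φ is a strictly increasing convex function, then φ(X) ≤_{p0-tvar} φ(Y). -/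
/-!
Factor `φ (G⁻¹ u) - φ (F⁻¹ u) = c u * (G⁻¹ u - F⁻¹ u)` with `c u` the slope of the chord of `φ`
between `F⁻¹ u` and `G⁻¹ u`. Since `φ` is increasing and convex and both quantile functions are
nondecreasing, `c` is a nonnegative nondecreasing weight on `(p, 1)`. Such a weight preserves the
nonnegativity of the tail integrals `∫_q^1 (G⁻¹ - F⁻¹)`, `q ≥ p` (an integral form of Abel's
inequality): the superlevel sets of `c` are tails up to a null set, so the claim holds for the
staircase approximations `∑ₖ 1{c ≥ k/n}/n` of `c`, and passes to the limit by dominated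
convergence.
-/

open MeasureTheory Set Filter Topology

/-- Tail value at risk defined from a quantile function. -/
noncomputable def TVaRq (Finv : ℝ → ℝ) (p : ℝ) : ℝ := (1 - p)⁻¹ * ∫ u in p..1, Finv u

/-- On the diagonal any value between the one-sided derivatives would do: it keeps `chordSlope φ`
monotone in both endpoints when `φ` is convex. -/
noncomputable def chordSlope (φ : ℝ → ℝ) (a b : ℝ) : ℝ :=
  if a = b then derivWithin φ (Ioi a) a else slope φ a b

section ChordSlope

variable {φ : ℝ → ℝ}

lemma chordSlope_comm (φ : ℝ → ℝ) (a b : ℝ) : chordSlope φ a b = chordSlope φ b a := by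
  rcases eq_or_ne a b with rfl | hab
  · rfl
  · rw [chordSlope, chordSlope, if_neg hab, if_neg hab.symm, slope_comm]

lemma chordSlope_mul_sub (φ : ℝ → ℝ) (a b : ℝ) : chordSlope φ a b * (b - a) = φ b - φ a := by
  unfold chordSlope
  split_ifs with hab
  · simp [hab]
  · rw [slope_def_field, div_mul_cancel₀ _ (sub_ne_zero.2 (Ne.symm hab))]

lemma Monotone.chordSlope_nonneg (hφ : Monotone φ) (a b : ℝ) : 0 ≤ chordSlope φ a b := by
  unfold chordSlope
  split_ifs
  · exact (hφ.monotoneOn _).derivWithin_nonneg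
  · exact (hφ.monotoneOn univ).slope_nonneg trivial trivial

lemma ConvexOn.monotone_chordSlope (hφ : ConvexOn ℝ univ φ) (a : ℝ) :
    Monotone (chordSlope φ a) := by
  have ha : a ∈ interior univ := by simp
  intro b₁ b₂ hb
  unfold chordSlope
  split_ifs with h₁ h₂ h₂
  · rfl
  · exact hφ.rightDeriv_le_slope_of_mem_interior ha trivial
      (lt_of_le_of_ne (h₁ ▸ hb) h₂)
  · rw [slope_comm]
    refine (hφ.slope_le_leftDeriv_of_mem_interior trivial ha (lt_of_le_of_ne (h₂ ▸ hb) ?_)).trans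
      (hφ.leftDeriv_le_rightDeriv_of_mem_interior ha)
    exact fun h => h₁ h.symm
  · exact hφ.slope_mono trivial ⟨trivial, Ne.symm h₁⟩ ⟨trivial, Ne.symm h₂⟩ hb

lemma ConvexOn.chordSlope_mono (hφ : ConvexOn ℝ univ φ) {a₁ a₂ b₁ b₂ : ℝ} (ha : a₁ ≤ a₂)
    (hb : b₁ ≤ b₂) : chordSlope φ a₁ b₁ ≤ chordSlope φ a₂ b₂ :=
  calc chordSlope φ a₁ b₁ ≤ chordSlope φ a₁ b₂ := hφ.monotone_chordSlope a₁ hb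
    _ = chordSlope φ b₂ a₁ := chordSlope_comm φ a₁ b₂
    _ ≤ chordSlope φ b₂ a₂ := hφ.monotone_chordSlope b₂ ha
    _ = chordSlope φ a₂ b₂ := chordSlope_comm φ b₂ a₂

end ChordSlope

noncomputable def stair (n : ℕ) (x : ℝ) : ℝ := (min (n * n) ⌊n * x⌋₊ : ℕ) / n

lemma stair_nonneg (n : ℕ) (x : ℝ) : 0 ≤ stair n x := by
  unfold stair; positivity

lemma stair_le {x : ℝ} (hx : 0 ≤ x) (n : ℕ) : stair n x ≤ x := by
  rcases n.eq_zero_or_pos with rfl | hn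
  · simpa [stair] using hx
  rw [stair, div_le_iff₀' (by positivity)]
  calc ((min (n * n) ⌊n * x⌋₊ : ℕ) : ℝ) ≤ ⌊n * x⌋₊ := by exact_mod_cast min_le_right _ _
    _ ≤ n * x := Nat.floor_le (by positivity)

lemma measurable_stair (n : ℕ) : Measurable (stair n) := by
  unfold stair; fun_prop

lemma stair_eq_sum (n : ℕ) (x : ℝ) :
    stair n x = (∑ k ∈ Finset.range (n * n), if (k + 1 : ℝ) ≤ n * x then (1 : ℝ) else 0) / n := by
  have hcount : (Finset.range (n * n)).filter (fun k : ℕ => (k + 1 : ℝ) ≤ n * x) =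
      Finset.range (min (n * n) ⌊n * x⌋₊) := by
    ext k
    rw [Finset.mem_filter, Finset.mem_range, Finset.mem_range, lt_min_iff, ← Nat.cast_add_one,
      ← Nat.le_floor_iff' k.succ_ne_zero, Nat.add_one_le_iff]
  rw [Finset.sum_boole, hcount, Finset.card_range, stair]

lemma tendsto_stair {x : ℝ} (hx : 0 ≤ x) : Tendsto (stair · x) atTop (𝓝 x) := by
  have hlower : ∀ᶠ n : ℕ in atTop, x - 1 / n ≤ stair n x := by
    filter_upwards [eventually_ge_atTop ⌈x⌉₊, eventually_gt_atTop 0] with n hxn hn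
    have hn' : (0 : ℝ) < n := by exact_mod_cast hn
    have hfloor : ⌊n * x⌋₊ ≤ n * n := Nat.floor_le_of_le <| by
      push_cast
      exact mul_le_mul_of_nonneg_left ((Nat.le_ceil x).trans (by exact_mod_cast hxn)) hn'.le
    rw [stair, min_eq_right hfloor, le_div_iff₀ hn', sub_mul, one_div_mul_cancel hn'.ne',
      mul_comm]
    exact (Nat.sub_one_lt_floor _).le
  refine tendsto_of_tendsto_of_tendsto_of_le_of_le' ?_ tendsto_const_nhds hlower
    (Eventually.of_forall (stair_le hx))
  simpa using tendsto_const_nhds.sub (tendsto_one_div_atTop_nhds_zero_nat (𝕜 := ℝ))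

section TailIntegrals

variable {g h : ℝ → ℝ} {p b : ℝ}

lemma setIntegral_nonneg_of_tail_nonneg {T : Set ℝ} (hT : T ⊆ Ioo p b)
    (hup : ∀ u ∈ T, ∀ v ∈ Ioo p b, u ≤ v → v ∈ T)
    (htail : ∀ q, p ≤ q → 0 ≤ ∫ u in Ioo q b, g u) : 0 ≤ ∫ u in T, g u := by
  rcases T.eq_empty_or_nonempty with rfl | hne
  · simp
  have hbdd : BddBelow T := ⟨p, fun v hv => (hT hv).1.le⟩
  have hIoo : Ioo (sInf T) b ⊆ T := fun v hv => by
    obtain ⟨u, hu, huv⟩ := exists_lt_of_csInf_lt hne hv.1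
    exact hup u hu v ⟨(hT hu).1.trans huv, hv.2⟩ huv.le
  have hIcc : T ⊆ Icc (sInf T) b := fun v hv => ⟨csInf_le hbdd hv, (hT hv).2.le⟩
  have hae : T =ᵐ[volume] Ioo (sInf T) b :=
    (hIcc.eventuallyLE.trans Ioo_ae_eq_Icc.symm.le).antisymm hIoo.eventuallyLE
  rw [setIntegral_congr_set hae]
  exact htail _ (le_csInf hne fun v hv => (hT hv).1.le)

lemma setIntegral_stair_comp_mul_nonneg (hmono : MonotoneOn h (Ioo p b))
    (hg : IntegrableOn g (Ioo p b)) (htail : ∀ q, p ≤ q → 0 ≤ ∫ u in Ioo q b, g u) (n : ℕ) :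
    0 ≤ ∫ u in Ioo p b, stair n (h u) * g u := by
  set S : ℕ → Set ℝ := fun k => {u ∈ Ioo p b | (k + 1 : ℝ) ≤ n * h u}
  have hup : ∀ k, ∀ u ∈ S k, ∀ v ∈ Ioo p b, u ≤ v → v ∈ S k := fun k u hu v hv huv =>
    ⟨hv, hu.2.trans (mul_le_mul_of_nonneg_left (hmono hu.1 hv huv) n.cast_nonneg)⟩
  have hmeas : ∀ k, MeasurableSet (S k) := fun k => OrdConnected.measurableSet
    ⟨fun x hx y hy z hz => hup k x hx z ⟨hx.1.1.trans_le hz.1, hz.2.trans_lt hy.1.2⟩ hz.1⟩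
  have hsum : EqOn (fun u => stair n (h u) * g u)
      (fun u => (∑ k ∈ Finset.range (n * n), (S k).indicator g u) / n) (Ioo p b) := by
    intro u hu
    simp only [stair_eq_sum, indicator_apply, S, mem_ofPred_eq, hu, true_and, div_mul_eq_mul_div,
      Finset.sum_mul, ite_mul, one_mul, zero_mul]
  rw [setIntegral_congr_fun measurableSet_Ioo hsum, integral_div,
    integral_finsetSum _ fun k _ => hg.indicator (hmeas k)]
  refine div_nonneg (Finset.sum_nonneg fun k _ => ?_) n.cast_nonneg
  rw [integral_indicator (hmeas k), Measure.restrict_restrict (hmeas k),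
    inter_eq_self_of_subset_left (sep_subset _ _)]
  exact setIntegral_nonneg_of_tail_nonneg (sep_subset _ _) (hup k) htail

theorem setIntegral_mul_nonneg_of_tail_nonneg (hmono : MonotoneOn h (Ioo p b))
    (hpos : ∀ u ∈ Ioo p b, 0 ≤ h u) (hg : IntegrableOn g (Ioo p b))
    (hhg : IntegrableOn (fun u => h u * g u) (Ioo p b))
    (htail : ∀ q, p ≤ q → 0 ≤ ∫ u in Ioo q b, g u) :
    0 ≤ ∫ u in Ioo p b, h u * g u := by
  have hmeas : AEMeasurable h (volume.restrict (Ioo p b)) :=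
    aemeasurable_restrict_of_monotoneOn measurableSet_Ioo hmono
  refine ge_of_tendsto (tendsto_integral_of_dominated_convergence (fun u => ‖h u * g u‖)
    (fun n => ((measurable_stair n).comp_aemeasurable hmeas).aestronglyMeasurable.mul
      hg.aestronglyMeasurable) hhg.norm (fun n => ?_) ?_)
    (Eventually.of_forall (setIntegral_stair_comp_mul_nonneg hmono hg htail))
  · filter_upwards [ae_restrict_mem measurableSet_Ioo] with u hu
    change ‖stair n (h u) * g u‖ ≤ ‖h u * g u‖
    rw [norm_mul, norm_mul, Real.norm_of_nonneg (stair_nonneg _ _),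
      Real.norm_of_nonneg (hpos u hu)]
    exact mul_le_mul_of_nonneg_right (stair_le (hpos u hu) n) (norm_nonneg _)
  · filter_upwards [ae_restrict_mem measurableSet_Ioo] with u hu
    exact (tendsto_stair (hpos u hu)).mul_const (g u)

end TailIntegrals

lemma intervalIntegral_le_iff_setIntegral_Ioo_sub_nonneg {f₁ f₂ : ℝ → ℝ} {a b : ℝ} (hab : a ≤ b)
    (h₁ : IntegrableOn f₁ (Ioo a b)) (h₂ : IntegrableOn f₂ (Ioo a b)) :
    (∫ u in a..b, f₁ u) ≤ ∫ u in a..b, f₂ u ↔ 0 ≤ ∫ u in Ioo a b, (f₂ u - f₁ u) := by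
  rw [intervalIntegral.integral_of_le hab, intervalIntegral.integral_of_le hab,
    integral_Ioc_eq_integral_Ioo, integral_Ioc_eq_integral_Ioo, integral_sub h₂ h₁, sub_nonneg]

theorem stmt8 (Finv Ginv φ : ℝ → ℝ) (p0 : ℝ) (hp0 : p0 ∈ Set.Ioo (0:ℝ) 1)
    (hFmono : MonotoneOn Finv (Set.Ioo 0 1)) (hGmono : MonotoneOn Ginv (Set.Ioo 0 1))
    (hφ : StrictMono φ) (hconv : ConvexOn ℝ Set.univ φ)
    (hF : IntegrableOn Finv (Set.Ioo 0 1)) (hG : IntegrableOn Ginv (Set.Ioo 0 1))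
    (hφF : IntegrableOn (fun u => φ (Finv u)) (Set.Ioo 0 1))
    (hφG : IntegrableOn (fun u => φ (Ginv u)) (Set.Ioo 0 1))
    (hord : ∀ p, p0 ≤ p → p < 1 → (∫ u in p..1, Finv u) ≤ ∫ u in p..1, Ginv u) :
    ∀ p, p0 ≤ p → p < 1 → (∫ u in p..1, φ (Finv u)) ≤ ∫ u in p..1, φ (Ginv u) := by
  intro p hp hp1
  have hsub : ∀ {q}, p ≤ q → Ioo q 1 ⊆ Ioo 0 1 := fun hq =>
    Ioo_subset_Ioo_left (hp0.1.le.trans (hp.trans hq))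
  have htail : ∀ q, p ≤ q → 0 ≤ ∫ u in Ioo q 1, (Ginv u - Finv u) := by
    intro q hq
    rcases lt_or_ge q 1 with hq1 | hq1
    · exact (intervalIntegral_le_iff_setIntegral_Ioo_sub_nonneg hq1.le (hF.mono_set (hsub hq))
        (hG.mono_set (hsub hq))).1 (hord q (hp.trans hq) hq1)
    · simp [Ioo_eq_empty_of_le hq1]
  have hI : Ioo p 1 ⊆ Ioo 0 1 := hsub le_rfl
  have hfactor : ∀ u, φ (Ginv u) - φ (Finv u) =
      chordSlope φ (Finv u) (Ginv u) * (Ginv u - Finv u) := fun u => (chordSlope_mul_sub φ _ _).symm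
  rw [intervalIntegral_le_iff_setIntegral_Ioo_sub_nonneg hp1.le (hφF.mono_set hI)
    (hφG.mono_set hI)]
  simp only [hfactor]
  exact setIntegral_mul_nonneg_of_tail_nonneg
    (fun u hu v hv huv => hconv.chordSlope_mono (hFmono (hI hu) (hI hv) huv)
      (hGmono (hI hu) (hI hv) huv))
    (fun u _ => hφ.monotone.chordSlope_nonneg _ _)
    ((hG.mono_set hI).sub (hF.mono_set hI))
    (((hφG.mono_set hI).sub (hφF.mono_set hI)).congr_fun (fun u _ => hfactor u) measurableSet_Ioo)
    htail
end

section
/- If max{X, F^{-1}(p0)} ≤_{icx} max{Y, G^{-1}(p0)} for some p0 ∈ (0,1), then X ≤_{p0-tvar} Y. -/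
open MeasureTheory Set

lemma cdfR_eq_cdf (μ : Measure ℝ) [IsProbabilityMeasure μ] (x : ℝ) :
    cdfR μ x = ProbabilityTheory.cdf μ x :=
  (ProbabilityTheory.cdf_eq_real μ x).symm

lemma bddBelow_level (μ : Measure ℝ) [IsProbabilityMeasure μ] {p : ℝ} (hp : 0 < p) :
    BddBelow {x | p ≤ cdfR μ x} := by
  have h := ProbabilityTheory.tendsto_cdf_atBot μ
  have h2 : ∀ᶠ x in Filter.atBot, ProbabilityTheory.cdf μ x < p :=
    h.eventually_lt_const hp
  obtain ⟨x0, hx0⟩ := h2.exists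
  obtain ⟨x1, hx1⟩ := (Filter.eventually_atBot.mp h2)
  refine ⟨x1, fun x hx => ?_⟩
  by_contra hlt
  push_neg at hlt
  have h3 := hx1 x hlt.le
  rw [← cdfR_eq_cdf] at h3
  exact absurd hx (not_le.mpr h3)

lemma cdfR_map_max (μ : Measure ℝ) [IsProbabilityMeasure μ] (c x : ℝ) :
    cdfR (μ.map fun y => max y c) x = if c ≤ x then cdfR μ x else 0 := by
  have hm : Measurable fun y : ℝ => max y c := measurable_id.max measurable_const
  unfold cdfR
  rw [Measure.map_apply hm measurableSet_Iic]
  by_cases hc : c ≤ x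
  · simp only [hc, if_true]
    have : (fun y : ℝ => max y c) ⁻¹' Iic x = Iic x := by
      ext y
      simp [max_le_iff, hc]
    rw [this]
  · simp only [hc, if_false]
    have : (fun y : ℝ => max y c) ⁻¹' Iic x = ∅ := by
      ext y
      simp only [mem_preimage, mem_Iic, mem_empty_iff_false, iff_false]
      intro h
      exact hc (le_trans (le_max_right y c) h)
    rw [this]
    simp

lemma quantR_map_max (μ : Measure ℝ) [IsProbabilityMeasure μ] {p0 u : ℝ}
    (hp0 : 0 < p0) (hu : p0 ≤ u) :
    quantR (μ.map fun x => max x (quantR μ p0)) u = quantR μ u := by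
  set c := quantR μ p0 with hc
  have hbdd : BddBelow {x | p0 ≤ cdfR μ x} := bddBelow_level μ hp0
  have hA_sub : {x | u ≤ cdfR μ x} ⊆ Ici c := by
    intro x hx
    exact csInf_le hbdd (le_trans hu hx)
  have hset : {x | u ≤ cdfR (μ.map fun y => max y c) x} = {x | u ≤ cdfR μ x} := by
    ext x
    simp only [mem_setOf_eq, cdfR_map_max]
    by_cases hcx : c ≤ x
    · simp [hcx]
    · simp only [hcx, if_false]
      constructor
      · intro h; linarith
      · intro h; exact absurd (hA_sub h) hcx
  unfold quantR
  rw [hset]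

lemma tvarR_map_max (μ : Measure ℝ) [IsProbabilityMeasure μ] {p0 p : ℝ}
    (hp0 : 0 < p0) (hp : p0 ≤ p) (hp1 : p ≤ 1) :
    tvarR (μ.map fun x => max x (quantR μ p0)) p = tvarR μ p := by
  unfold tvarR
  congr 1
  apply intervalIntegral.integral_congr
  intro u hu
  rw [uIcc_of_le hp1] at hu
  exact quantR_map_max μ hp0 (le_trans hp hu.1)

theorem stmt11 (μ ν : Measure ℝ) [IsProbabilityMeasure μ] [IsProbabilityMeasure ν]
    (hX : Integrable id μ) (hY : Integrable id ν)
    (p0 : ℝ) (hp0 : p0 ∈ Set.Ioo (0:ℝ) 1)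
    (hicx : ∀ p ∈ Set.Ioo (0:ℝ) 1,
      tvarR (μ.map fun x => max x (quantR μ p0)) p ≤
        tvarR (ν.map fun x => max x (quantR ν p0)) p) :
    ∀ p, p0 < p → p < 1 → tvarR μ p ≤ tvarR ν p := by
  intro p hp hp1
  have hmem : p ∈ Set.Ioo (0:ℝ) 1 := ⟨lt_trans hp0.1 hp, hp1⟩
  have h := hicx p hmem
  rwa [tvarR_map_max μ hp0.1 hp.le hp1.le, tvarR_map_max ν hp0.1 hp.le hp1.le] at h
end

section
/- Let X ~ N(μ1, σ1) and Y ~ N(μ2, σ2) be normal random variables with μ1 > μ2 and σ1 < σ2. Then the quantile functions satisfy G^{-1}(p) ≥ F^{-1}(p) for all p ≥ p0 and G^{-1}(p) ≤ F^{-1}(p) for all p ≤ p0, where p0 = Φ((μ1-μ2)/(σ2-σ1)) and Φ is the standard normal CDF; consequently X ≤_{p0-tvar} Y. -/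
open MeasureTheory Set

/-- Standard normal distribution function. -/
noncomputable def stdPhi : ℝ → ℝ := cdfR (ProbabilityTheory.gaussianReal 0 1)

/-- Standard normal quantile function. -/
noncomputable def stdPhiInv : ℝ → ℝ := quantR (ProbabilityTheory.gaussianReal 0 1)

open ProbabilityTheory Filter

lemma aux_stdPhi_eq_cdf (x : ℝ) : stdPhi x = ProbabilityTheory.cdf (gaussianReal 0 1) x :=
  (ProbabilityTheory.cdf_eq_real _ x).symm

lemma aux_gauss_pos {s : Set ℝ} (h : volume s ≠ 0) : 0 < gaussianReal 0 1 s := by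
  rcases eq_or_ne (gaussianReal 0 1 s) 0 with h' | h'
  · exact absurd (gaussianReal_absolutelyContinuous' 0 one_ne_zero h') h
  · exact h'.bot_lt

lemma aux_stdPhi_strictMono : StrictMono stdPhi := by
  intro x y hxy
  have hsplit : gaussianReal 0 1 (Iic y)
      = gaussianReal 0 1 (Iic x) + gaussianReal 0 1 (Ioc x y) := by
    rw [← measure_union (Iic_disjoint_Ioc le_rfl) measurableSet_Ioc,
      Iic_union_Ioc_eq_Iic hxy.le]
  have hpos : 0 < gaussianReal 0 1 (Ioc x y) := by
    apply aux_gauss_pos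
    rw [Real.volume_Ioc]
    simp [hxy, sub_pos.mpr hxy, ENNReal.ofReal_eq_zero, not_le]
  have hfin : gaussianReal 0 1 (Ioc x y) ≠ ⊤ := measure_ne_top _ _
  have hfin' : gaussianReal 0 1 (Iic x) ≠ ⊤ := measure_ne_top _ _
  unfold stdPhi cdfR
  rw [hsplit, ENNReal.toReal_add hfin' hfin]
  have : 0 < (gaussianReal 0 1 (Ioc x y)).toReal := ENNReal.toReal_pos hpos.ne' hfin
  linarith

lemma aux_stdPhi_lt_one (x : ℝ) : stdPhi x < 1 := by
  have hc : gaussianReal 0 1 (Iic x) + gaussianReal 0 1 (Ioi x) = 1 := by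
    rw [← measure_union (Iic_disjoint_Ioi le_rfl) measurableSet_Ioi, Iic_union_Ioi]
    simp
  have hpos : 0 < gaussianReal 0 1 (Ioi x) := by
    apply aux_gauss_pos
    simp [Real.volume_Ioi]
  have hfin : gaussianReal 0 1 (Ioi x) ≠ ⊤ := measure_ne_top _ _
  have hfin' : gaussianReal 0 1 (Iic x) ≠ ⊤ := measure_ne_top _ _
  unfold stdPhi cdfR
  have h1 : (gaussianReal 0 1 (Iic x)).toReal + (gaussianReal 0 1 (Ioi x)).toReal = 1 := by
    rw [← ENNReal.toReal_add hfin' hfin, hc]; rfl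
  have : 0 < (gaussianReal 0 1 (Ioi x)).toReal := ENNReal.toReal_pos hpos.ne' hfin
  linarith

lemma aux_stdPhi_pos (x : ℝ) : 0 < stdPhi x := by
  have hpos : 0 < gaussianReal 0 1 (Iic x) := by
    apply aux_gauss_pos
    simp [Real.volume_Iic]
  exact ENNReal.toReal_pos hpos.ne' (measure_ne_top _ _)

lemma aux_tendsto_atTop : Tendsto stdPhi atTop (nhds 1) := by
  have := ProbabilityTheory.tendsto_cdf_atTop (gaussianReal 0 1)
  exact this.congr fun x => (aux_stdPhi_eq_cdf x).symm

lemma aux_tendsto_atBot : Tendsto stdPhi atBot (nhds 0) := by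
  have := ProbabilityTheory.tendsto_cdf_atBot (gaussianReal 0 1)
  exact this.congr fun x => (aux_stdPhi_eq_cdf x).symm

lemma aux_set_nonempty {p : ℝ} (hp : p < 1) : {x | p ≤ stdPhi x}.Nonempty := by
  have h := aux_tendsto_atTop.eventually (eventually_gt_nhds hp)
  obtain ⟨x, hx⟩ := h.exists
  exact ⟨x, hx.le⟩

lemma aux_bddBelow {p : ℝ} (hp : 0 < p) : BddBelow {x | p ≤ stdPhi x} := by
  have h := aux_tendsto_atBot.eventually (eventually_lt_nhds hp)
  obtain ⟨x0, hx0⟩ := h.exists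
  refine ⟨x0, fun y hy => ?_⟩
  by_contra hlt
  push_neg at hlt
  exact absurd (hy.trans_lt (lt_of_le_of_lt (aux_stdPhi_strictMono hlt).le hx0)) (lt_irrefl p)

/-- If `p ≤ Φ(c)` and `0 < p`, then `Φ⁻¹(p) ≤ c`. -/
lemma aux_quant_le {c p : ℝ} (hp : 0 < p) (h : p ≤ stdPhi c) : stdPhiInv p ≤ c :=
  csInf_le (aux_bddBelow hp) h

/-- If `Φ(c) ≤ p` and `p < 1`, then `c ≤ Φ⁻¹(p)`. -/
lemma aux_le_quant {c p : ℝ} (hp : p < 1) (h : stdPhi c ≤ p) : c ≤ stdPhiInv p := by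
  refine le_csInf (aux_set_nonempty hp) fun x hx => ?_
  exact (aux_stdPhi_strictMono.le_iff_le).mp (h.trans hx)

theorem stmt17 (μ1 μ2 σ1 σ2 : ℝ) (hμ : μ2 < μ1) (hσ1 : 0 < σ1) (hσ : σ1 < σ2) :
    (∀ p, stdPhi ((μ1 - μ2) / (σ2 - σ1)) ≤ p → p < 1 →
      μ1 + σ1 * stdPhiInv p ≤ μ2 + σ2 * stdPhiInv p) ∧
    (∀ p, 0 < p → p ≤ stdPhi ((μ1 - μ2) / (σ2 - σ1)) →
      μ2 + σ2 * stdPhiInv p ≤ μ1 + σ1 * stdPhiInv p) ∧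
    (∀ p, stdPhi ((μ1 - μ2) / (σ2 - σ1)) ≤ p → p < 1 →
      (∫ u in p..1, (μ1 + σ1 * stdPhiInv u)) ≤ ∫ u in p..1, (μ2 + σ2 * stdPhiInv u)) := by
  set c : ℝ := (μ1 - μ2) / (σ2 - σ1) with hc
  have hσd : 0 < σ2 - σ1 := sub_pos.mpr hσ
  have hcd : (σ2 - σ1) * c = μ1 - μ2 := by
    rw [hc]; field_simp
  have part1 : ∀ p, stdPhi c ≤ p → p < 1 →
      μ1 + σ1 * stdPhiInv p ≤ μ2 + σ2 * stdPhiInv p := by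
    intro p h1 h2
    have hz : c ≤ stdPhiInv p := aux_le_quant h2 h1
    nlinarith
  have part2 : ∀ p, 0 < p → p ≤ stdPhi c →
      μ2 + σ2 * stdPhiInv p ≤ μ1 + σ1 * stdPhiInv p := by
    intro p h1 h2
    have hz : stdPhiInv p ≤ c := aux_quant_le h1 h2
    nlinarith
  refine ⟨part1, part2, ?_⟩
  intro p h1 h2
  by_cases hint : IntervalIntegrable (fun u => stdPhiInv u) volume p 1
  · have hi1 : IntervalIntegrable (fun u => μ1 + σ1 * stdPhiInv u) volume p 1 :=
      intervalIntegrable_const.add (hint.smul σ1)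
    have hi2 : IntervalIntegrable (fun u => μ2 + σ2 * stdPhiInv u) volume p 1 :=
      intervalIntegrable_const.add (hint.smul σ2)
    refine intervalIntegral.integral_mono_ae_restrict h2.le hi1 hi2 ?_
    have hne : ∀ᵐ u ∂(volume.restrict (Icc p 1)), u ≠ 1 := by
      refine ae_restrict_of_ae ?_
      rw [ae_iff]
      have : {a : ℝ | ¬ a ≠ 1} = {1} := by ext a; simp
      rw [this]
      exact Real.volume_singleton
    filter_upwards [hne, ae_restrict_mem measurableSet_Icc] with u hu1 hu2
    exact part1 u (h1.trans hu2.1) (lt_of_le_of_ne hu2.2 hu1)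
  · have key : ∀ m s : ℝ, s ≠ 0 →
        ¬ IntervalIntegrable (fun u => m + s * stdPhiInv u) volume p 1 := by
      intro m s hs hII
      apply hint
      have : (fun u => stdPhiInv u)
          = fun u => s⁻¹ * ((m + s * stdPhiInv u) - m) := by
        funext u; field_simp; ring
      rw [this]
      exact ((hII.sub intervalIntegrable_const).smul s⁻¹)
    rw [intervalIntegral.integral_undef (key μ1 σ1 hσ1.ne'),
      intervalIntegral.integral_undef (key μ2 σ2 (hσ1.trans hσ).ne')]
end

section
/- Let X ~ Pareto(a1, k1) and Y ~ Pareto(a2, k2) with a1 k1/(a1-1) > a2 k2/(a2-1) (so E[X] > E[Y]) and k2 < k1 suitably such that the quantile functions cross exactly once; then there exists p0 ∈ (0,1) such that F^{-1}(p) ≤ G^{-1}(p) for all p ≥ p0, namely the unique p0 solving k1(1-p0)^{-1/a1} = k2(1-p0)^{-1/a2}, and hence X ≤_{p0-tvar} Y while E[X] > E[Y], so X is not smaller than Y in the increasing convex order. -/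
open MeasureTheory Set intervalIntegral

lemma integ (k a p : ℝ) (ha : 1 < a) :
    (∫ u in p..1, k * (1 - u) ^ (-(1/a))) = k / (1 - 1/a) * (1-p) ^ (1 - 1/a) := by
  have ha0 : (0:ℝ) < a := by linarith
  have hlt : 1/a < 1 := by rw [div_lt_one ha0]; exact ha
  have hr : (-1:ℝ) < -(1/a) := by linarith
  have h1 : (∫ u in p..1, k * (1 - u) ^ (-(1/a)))
      = k * ∫ u in p..1, (1 - u) ^ (-(1/a)) := by
    rw [← intervalIntegral.integral_const_mul]
  have h2 : (∫ u in p..1, (1 - u) ^ (-(1/a)))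
      = ∫ x in (0:ℝ)..(1-p), x ^ (-(1/a)) := by
    have := intervalIntegral.integral_comp_sub_left (a := p) (b := 1)
      (fun x => x ^ (-(1/a))) 1
    simpa using this
  have h3 : (0:ℝ) ^ (-(1/a) + 1) = 0 := by
    have : (0:ℝ) < -(1/a) + 1 := by linarith
    rw [Real.zero_rpow this.ne']
  rw [h1, h2, integral_rpow (Or.inl hr), h3]
  rw [show -(1/a) + 1 = 1 - 1/a by ring]
  ring

theorem stmt18 (a1 a2 k1 k2 : ℝ) (ha1 : 1 < a1) (ha2 : 1 < a2) (ha : a2 < a1)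
    (hk2 : 0 < k2) (hk : k2 < k1)
    (hmean : a2 * k2 / (a2 - 1) < a1 * k1 / (a1 - 1)) :
    ∃ p0 ∈ Set.Ioo (0:ℝ) 1,
      k1 * (1 - p0) ^ (-(1 / a1)) = k2 * (1 - p0) ^ (-(1 / a2)) ∧
      (∀ q ∈ Set.Ioo (0:ℝ) 1,
        k1 * (1 - q) ^ (-(1 / a1)) = k2 * (1 - q) ^ (-(1 / a2)) → q = p0) ∧
      (∀ p, p0 ≤ p → p < 1 →
        k1 * (1 - p) ^ (-(1 / a1)) ≤ k2 * (1 - p) ^ (-(1 / a2))) ∧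
      (∀ p, p0 ≤ p → p < 1 →
        (∫ u in p..1, k1 * (1 - u) ^ (-(1 / a1))) ≤ ∫ u in p..1, k2 * (1 - u) ^ (-(1 / a2))) ∧
      ¬ (∀ p ∈ Set.Ioo (0:ℝ) 1,
        (∫ u in p..1, k1 * (1 - u) ^ (-(1 / a1))) ≤ ∫ u in p..1, k2 * (1 - u) ^ (-(1 / a2))) := by
  have ha10 : (0:ℝ) < a1 := by linarith
  have ha20 : (0:ℝ) < a2 := by linarith
  have hk1 : (0:ℝ) < k1 := hk2.trans hk
  have h1a1 : 1/a1 < 1 := by rw [div_lt_one ha10]; exact ha1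
  have h1a2 : 1/a2 < 1 := by rw [div_lt_one ha20]; exact ha2
  have hd1 : (0:ℝ) < 1 - 1/a1 := by linarith
  have hd2 : (0:ℝ) < 1 - 1/a2 := by linarith
  set c : ℝ := 1/a2 - 1/a1 with hcdef
  have hc : 0 < c := by
    have : 1/a1 < 1/a2 := by
      apply one_div_lt_one_div_of_lt ha20 ha
    simpa [hcdef] using sub_pos.mpr this
  -- generic key iff
  have hgen : ∀ (K1 K2 t e : ℝ), 0 < t →
      (K1 * t ^ e ≤ K2 * t ^ (e - c) ↔ K1 * t ^ c ≤ K2) := by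
    intro K1 K2 t e ht
    rw [show e - c = e + (-c) by ring, Real.rpow_add ht, Real.rpow_neg ht.le,
      mul_comm (t ^ e) _, ← mul_assoc, ← div_eq_mul_inv,
      mul_le_mul_iff_of_pos_right (Real.rpow_pos_of_pos ht e), le_div_iff₀ (Real.rpow_pos_of_pos ht c)]
  have hgeneq : ∀ (K1 K2 t e : ℝ), 0 < t →
      (K1 * t ^ e = K2 * t ^ (e - c) ↔ K1 * t ^ c = K2) := by
    intro K1 K2 t e ht
    rw [show e - c = e + (-c) by ring, Real.rpow_add ht, Real.rpow_neg ht.le,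
      mul_comm (t ^ e) _, ← mul_assoc, ← div_eq_mul_inv,
      mul_left_inj' (Real.rpow_pos_of_pos ht e).ne', eq_div_iff (Real.rpow_pos_of_pos ht c).ne']
  set t0 : ℝ := (k2/k1) ^ (1/c) with ht0def
  have hkk0 : 0 < k2/k1 := div_pos hk2 hk1
  have hkk1 : k2/k1 < 1 := (div_lt_one hk1).mpr hk
  have ht0pos : 0 < t0 := Real.rpow_pos_of_pos hkk0 _
  have ht0lt : t0 < 1 := Real.rpow_lt_one hkk0.le hkk1 (by positivity)
  have ht0c : t0 ^ c = k2 / k1 := by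
    rw [ht0def, ← Real.rpow_mul hkk0.le, one_div_mul_cancel hc.ne', Real.rpow_one]
  refine ⟨1 - t0, ⟨by linarith, by linarith⟩, ?_, ?_, ?_, ?_, ?_⟩
  · -- equality at p0
    rw [show (1:ℝ) - (1 - t0) = t0 by ring,
      show -(1/a2) = -(1/a1) - c by rw [hcdef]; ring,
      hgeneq k1 k2 t0 (-(1/a1)) ht0pos, ht0c]
    field_simp
  · -- uniqueness
    rintro q ⟨hq0, hq1⟩ hq
    have htq : 0 < 1 - q := by linarith
    rw [show -(1/a2) = -(1/a1) - c by rw [hcdef]; ring,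
      hgeneq k1 k2 (1-q) (-(1/a1)) htq] at hq
    have h1 : (1-q) ^ c = k2 / k1 := by
      field_simp at hq ⊢
      linarith [hq]
    have h2 : (1-q) = t0 := by
      have h3 := congrArg (fun x : ℝ => x ^ (1/c)) h1
      change ((1-q) ^ c) ^ (1/c) = (k2/k1) ^ (1/c) at h3
      rw [← Real.rpow_mul htq.le] at h3
      rw [mul_one_div, div_self hc.ne', Real.rpow_one] at h3
      rw [h3, ht0def]
    linarith
  · -- pointwise
    intro p hp0 hp1
    have htp : 0 < 1 - p := by linarith
    rw [show -(1/a2) = -(1/a1) - c by rw [hcdef]; ring,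
      hgen k1 k2 (1-p) (-(1/a1)) htp]
    have h1 : (1-p) ^ c ≤ t0 ^ c := Real.rpow_le_rpow htp.le (by linarith) hc.le
    have h2 : k1 * (1-p) ^ c ≤ k1 * (t0 ^ c) := by nlinarith
    rw [ht0c] at h2
    calc k1 * (1-p) ^ c ≤ k1 * (k2/k1) := h2
      _ = k2 := by field_simp
  · -- integral inequality
    intro p hp0 hp1
    have htp : 0 < 1 - p := by linarith
    rw [integ k1 a1 p ha1, integ k2 a2 p ha2]
    nth_rewrite 2 [show 1 - 1/a2 = (1 - 1/a1) - c from by rw [hcdef]; ring]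
    rw [hgen (k1/(1-1/a1)) (k2/(1-1/a2)) (1-p) (1-1/a1) htp]
    have h1 : (1-p) ^ c ≤ t0 ^ c := Real.rpow_le_rpow htp.le (by linarith) hc.le
    have h2 : k1 * (1-p) ^ c ≤ k2 := by
      have h4 : k1 * (1-p) ^ c ≤ k1 * (t0 ^ c) := by nlinarith
      rw [ht0c] at h4
      calc k1 * (1-p) ^ c ≤ k1 * (k2/k1) := h4
        _ = k2 := by field_simp
    calc k1 / (1 - 1/a1) * (1-p) ^ c = (k1 * (1-p) ^ c) / (1 - 1/a1) := by ring
      _ ≤ k2 / (1 - 1/a2) := by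
        have hinv : 1/a1 < 1/a2 := one_div_lt_one_div_of_lt ha20 ha
        exact div_le_div₀ hk2.le h2 hd2 (by linarith)
  · -- negation
    intro hall
    set r : ℝ := (k2/(1-1/a2)) / (k1/(1-1/a1)) with hrdef
    have hK1 : 0 < k1/(1-1/a1) := div_pos hk1 hd1
    have hK2 : 0 < k2/(1-1/a2) := div_pos hk2 hd2
    have hr0 : 0 < r := div_pos hK2 hK1
    have hr1 : r < 1 := by
      rw [hrdef, div_lt_one hK1]
      have e1 : k2/(1-1/a2) = a2 * k2 / (a2 - 1) := by
        rw [div_eq_div_iff hd2.ne' (by linarith : (a2-1:ℝ) ≠ 0)]; field_simp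
      have e2 : k1/(1-1/a1) = a1 * k1 / (a1 - 1) := by
        rw [div_eq_div_iff hd1.ne' (by linarith : (a1-1:ℝ) ≠ 0)]; field_simp
      rw [e1, e2]; exact hmean
    set m : ℝ := (r + 1)/2 with hmdef
    have hm0 : 0 < m := by rw [hmdef]; linarith
    have hm1 : m < 1 := by rw [hmdef]; linarith
    have hmr : r < m := by rw [hmdef]; linarith
    set s : ℝ := m ^ (1/c) with hsdef
    have hs0 : 0 < s := Real.rpow_pos_of_pos hm0 _
    have hs1 : s < 1 := Real.rpow_lt_one hm0.le hm1 (by positivity)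
    have hsc : s ^ c = m := by
      rw [hsdef, ← Real.rpow_mul hm0.le, one_div_mul_cancel hc.ne', Real.rpow_one]
    have hle := hall (1 - s) ⟨by linarith, by linarith⟩
    rw [integ k1 a1 (1-s) ha1, integ k2 a2 (1-s) ha2,
      show (1:ℝ) - (1 - s) = s by ring] at hle
    nth_rewrite 2 [show 1 - 1/a2 = (1 - 1/a1) - c from by rw [hcdef]; ring] at hle
    rw [hgen (k1/(1-1/a1)) (k2/(1-1/a2)) s (1-1/a1) hs0, hsc] at hle
    have hcon : (k1/(1-1/a1)) * r = k2/(1-1/a2) := by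
      rw [hrdef, mul_comm]; exact div_mul_cancel₀ _ hK1.ne'
    nlinarith [hle, hcon, hmr, hK1]
end
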